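/- arXiv:2502.02766 — 2 statements merged into one kernel-verified Lean document; each statement's English description precedes it below -/
import Mathlib

section
/- If f(x) is the CDF of the normal distribution N(0, σ²), then for all real x, the second derivative of log(f(x)) satisfies 0 ≥ (log f(x))'' ≥ -1/σ². -/
/-!
Write `φ`, `Φ` for `stdNormalPDF`, `stdNormalCDF`. Then `(log Φ)'' = -φ (uΦ + φ) / Φ²`, so the two
bounds amount to `K = φ + uΦ ≥ 0` and `G = Φ² - uφΦ - φ² ≥ 0`. With `H = (1 + u²)Φ + uφ` one has
`K' = Φ`, `H' = 2K`, `G' = φH`, and `K`, `H`, `G` all vanish at `-∞` because `φ` and `Φ` decay like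
`eᵘ` there; so `K`, `H`, `G` are in turn increasing, hence nonnegative. Rescaling `x ↦ x / σ`
multiplies the second derivative by `1 / σ²`.
-/

open Real Set

noncomputable def stdNormalPDF (t : ℝ) : ℝ := (Real.sqrt (2 * Real.pi))⁻¹ * Real.exp (-t ^ 2 / 2)

noncomputable def stdNormalCDF (x : ℝ) : ℝ := ∫ t in Set.Iic x, stdNormalPDF t

open Filter MeasureTheory Topology Asymptotics

theorem deriv_deriv_comp_mul_left {𝕜 E : Type*} [NontriviallyNormedField 𝕜] [NormedAddCommGroup E]
    [NormedSpace 𝕜 E] (c : 𝕜) (f : 𝕜 → E) (x : 𝕜) :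
    deriv (deriv (f <| c * ·)) x = c ^ 2 • deriv (deriv f) (c * x) := by
  have h : deriv (f <| c * ·) = fun y => c • deriv f (c * y) := funext (deriv_comp_mul_left c f)
  rw [h, deriv_fun_const_smul_field, deriv_comp_mul_left, smul_smul, sq]

theorem tendsto_pow_mul_exp_atBot_nhds_zero (k : ℕ) :
    Tendsto (fun u : ℝ => u ^ k * exp u) atBot (𝓝 0) := by
  have h := ((tendsto_pow_mul_exp_neg_atTop_nhds_zero k).comp tendsto_neg_atBot_atTop).const_mul
    ((-1 : ℝ) ^ k)
  rw [mul_zero] at h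
  refine h.congr fun u => ?_
  simp only [Function.comp_apply, neg_neg, ← mul_assoc, ← mul_pow, neg_one_mul]

theorem tendsto_pow_mul_atBot_of_isBigO_exp (k : ℕ) {g : ℝ → ℝ} (hg : g =O[atBot] exp) :
    Tendsto (fun u => u ^ k * g u) atBot (𝓝 0) :=
  ((isBigO_refl (fun u : ℝ => u ^ k) atBot).mul hg).trans_tendsto
    (tendsto_pow_mul_exp_atBot_nhds_zero k)

lemma stdNormalPDF_pos (t : ℝ) : 0 < stdNormalPDF t := by
  unfold stdNormalPDF; positivity

lemma continuous_stdNormalPDF : Continuous stdNormalPDF := by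
  unfold stdNormalPDF; fun_prop

lemma integrable_stdNormalPDF : Integrable stdNormalPDF := by
  refine ((integrable_exp_neg_mul_sq (b := 2⁻¹) (by norm_num)).const_mul
    (√(2 * π))⁻¹).congr (.of_forall fun t => ?_)
  unfold stdNormalPDF; ring_nf

lemma hasDerivAt_stdNormalPDF (t : ℝ) : HasDerivAt stdNormalPDF (-t * stdNormalPDF t) t := by
  have h : HasDerivAt (fun t : ℝ => -t ^ 2 / 2) (-t) t :=
    ((hasDerivAt_pow 2 t).neg.div_const 2).congr_deriv (by push_cast; ring)
  exact (h.exp.const_mul (√(2 * π))⁻¹).congr_deriv (by unfold stdNormalPDF; ring)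

lemma hasDerivAt_stdNormalCDF (x : ℝ) : HasDerivAt stdNormalCDF (stdNormalPDF x) x := by
  have hΦ : ∀ y, stdNormalCDF y = stdNormalCDF 0 + ∫ t in (0 : ℝ)..y, stdNormalPDF t := fun y => by
    rw [← intervalIntegral.integral_Iic_sub_Iic integrable_stdNormalPDF.integrableOn
      integrable_stdNormalPDF.integrableOn, stdNormalCDF, stdNormalCDF, add_sub_cancel]
  rw [funext hΦ]
  exact (intervalIntegral.integral_hasDerivAt_right integrable_stdNormalPDF.intervalIntegrable
    (continuous_stdNormalPDF.stronglyMeasurableAtFilter _ _)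
    continuous_stdNormalPDF.continuousAt).const_add _

lemma stdNormalCDF_nonneg (x : ℝ) : 0 ≤ stdNormalCDF x :=
  setIntegral_nonneg measurableSet_Iic fun t _ => (stdNormalPDF_pos t).le

lemma strictMono_stdNormalCDF : StrictMono stdNormalCDF :=
  strictMono_of_hasDerivAt_pos hasDerivAt_stdNormalCDF stdNormalPDF_pos

lemma stdNormalCDF_pos (x : ℝ) : 0 < stdNormalCDF x :=
  (stdNormalCDF_nonneg (x - 1)).trans_lt (strictMono_stdNormalCDF (by linarith))

lemma stdNormalPDF_le_exp {t : ℝ} (ht : t ≤ -2) : stdNormalPDF t ≤ (√(2 * π))⁻¹ * exp t := by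
  unfold stdNormalPDF
  gcongr
  nlinarith

lemma stdNormalCDF_le_exp {x : ℝ} (hx : x ≤ -2) : stdNormalCDF x ≤ (√(2 * π))⁻¹ * exp x := by
  calc stdNormalCDF x ≤ ∫ t in Iic x, (√(2 * π))⁻¹ * exp t :=
        setIntegral_mono_on integrable_stdNormalPDF.integrableOn
          ((integrableOn_exp_Iic x).const_mul _) measurableSet_Iic
          fun t ht => stdNormalPDF_le_exp (le_trans ht hx)
    _ = (√(2 * π))⁻¹ * exp x := by rw [integral_const_mul, integral_exp_Iic]

lemma tendsto_pow_mul_stdNormalPDF_atBot (k : ℕ) :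
    Tendsto (fun u => u ^ k * stdNormalPDF u) atBot (𝓝 0) := by
  refine tendsto_pow_mul_atBot_of_isBigO_exp k (.of_bound (√(2 * π))⁻¹ ?_)
  filter_upwards [eventually_le_atBot (-2)] with t ht
  simpa [abs_of_pos (stdNormalPDF_pos t)] using stdNormalPDF_le_exp ht

lemma tendsto_pow_mul_stdNormalCDF_atBot (k : ℕ) :
    Tendsto (fun u => u ^ k * stdNormalCDF u) atBot (𝓝 0) := by
  refine tendsto_pow_mul_atBot_of_isBigO_exp k (.of_bound (√(2 * π))⁻¹ ?_)
  filter_upwards [eventually_le_atBot (-2)] with t ht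
  simpa [abs_of_nonneg (stdNormalCDF_nonneg t)] using stdNormalCDF_le_exp ht

lemma stdNormalPDF_add_mul_stdNormalCDF_nonneg (u : ℝ) :
    0 ≤ stdNormalPDF u + u * stdNormalCDF u := by
  have hderiv (v : ℝ) : HasDerivAt (fun v => stdNormalPDF v + v * stdNormalCDF v)
      (stdNormalCDF v) v :=
    ((hasDerivAt_stdNormalPDF v).add
      ((hasDerivAt_id v).mul (hasDerivAt_stdNormalCDF v))).congr_deriv (by simp only [id_eq]; ring)
  have hlim : Tendsto (fun v => stdNormalPDF v + v * stdNormalCDF v) atBot (𝓝 0) := by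
    simpa using (tendsto_pow_mul_stdNormalPDF_atBot 0).add (tendsto_pow_mul_stdNormalCDF_atBot 1)
  exact (monotone_of_hasDerivAt_nonneg hderiv stdNormalCDF_nonneg).le_of_tendsto hlim u

lemma one_add_sq_mul_stdNormalCDF_add_mul_stdNormalPDF_nonneg (u : ℝ) :
    0 ≤ (1 + u ^ 2) * stdNormalCDF u + u * stdNormalPDF u := by
  have hderiv (v : ℝ) : HasDerivAt (fun v => (1 + v ^ 2) * stdNormalCDF v + v * stdNormalPDF v)
      (2 * (stdNormalPDF v + v * stdNormalCDF v)) v :=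
    ((((hasDerivAt_const v 1).add (hasDerivAt_pow 2 v)).mul (hasDerivAt_stdNormalCDF v)).add
      ((hasDerivAt_id v).mul (hasDerivAt_stdNormalPDF v))).congr_deriv
      (by simp only [id_eq, Pi.add_apply]; push_cast; ring)
  have hlim : Tendsto (fun v => (1 + v ^ 2) * stdNormalCDF v + v * stdNormalPDF v)
      atBot (𝓝 0) := by
    simpa [add_mul] using ((tendsto_pow_mul_stdNormalCDF_atBot 0).add
      (tendsto_pow_mul_stdNormalCDF_atBot 2)).add (tendsto_pow_mul_stdNormalPDF_atBot 1)
  exact (monotone_of_hasDerivAt_nonneg hderiv fun v => mul_nonneg zero_le_two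
    (stdNormalPDF_add_mul_stdNormalCDF_nonneg v)).le_of_tendsto hlim u

lemma mul_stdNormalPDF_mul_stdNormalCDF_add_sq_le_sq (u : ℝ) :
    u * stdNormalPDF u * stdNormalCDF u + stdNormalPDF u ^ 2 ≤ stdNormalCDF u ^ 2 := by
  set G := fun v => stdNormalCDF v ^ 2 - v * stdNormalPDF v * stdNormalCDF v - stdNormalPDF v ^ 2
  have hderiv (v : ℝ) : HasDerivAt G
      (stdNormalPDF v * ((1 + v ^ 2) * stdNormalCDF v + v * stdNormalPDF v)) v :=
    ((((hasDerivAt_stdNormalCDF v).pow 2).sub (((hasDerivAt_id v).mul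
      (hasDerivAt_stdNormalPDF v)).mul (hasDerivAt_stdNormalCDF v))).sub
      ((hasDerivAt_stdNormalPDF v).pow 2)).congr_deriv
      (by simp only [id_eq, Pi.mul_apply]; push_cast; ring)
  have hlim : Tendsto G atBot (𝓝 0) := by
    have hΦ := tendsto_pow_mul_stdNormalCDF_atBot 0
    have hφ := tendsto_pow_mul_stdNormalPDF_atBot 0
    simp only [pow_zero, one_mul] at hΦ hφ
    simpa [G, sq] using ((hΦ.mul hΦ).sub ((tendsto_pow_mul_stdNormalPDF_atBot 1).mul hΦ)).sub
      (hφ.mul hφ)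
  have := (monotone_of_hasDerivAt_nonneg hderiv fun v => mul_nonneg (stdNormalPDF_pos v).le
    (one_add_sq_mul_stdNormalCDF_add_mul_stdNormalPDF_nonneg v)).le_of_tendsto hlim u
  simp only [G] at this
  linarith

lemma deriv_deriv_log_stdNormalCDF (u : ℝ) :
    deriv (deriv fun v => log (stdNormalCDF v)) u =
      -(stdNormalPDF u * (u * stdNormalCDF u + stdNormalPDF u)) / stdNormalCDF u ^ 2 := by
  rw [funext fun v => ((hasDerivAt_stdNormalCDF v).log (stdNormalCDF_pos v).ne').deriv]
  exact ((hasDerivAt_stdNormalPDF u).div (hasDerivAt_stdNormalCDF u)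
    (stdNormalCDF_pos u).ne').deriv.trans (by ring)

lemma deriv_deriv_log_stdNormalCDF_nonpos (u : ℝ) :
    deriv (deriv fun v => log (stdNormalCDF v)) u ≤ 0 := by
  rw [deriv_deriv_log_stdNormalCDF]
  refine div_nonpos_of_nonpos_of_nonneg (neg_nonpos.2 (mul_nonneg (stdNormalPDF_pos u).le ?_))
    (sq_nonneg _)
  linarith [stdNormalPDF_add_mul_stdNormalCDF_nonneg u]

lemma neg_one_le_deriv_deriv_log_stdNormalCDF (u : ℝ) :
    -1 ≤ deriv (deriv fun v => log (stdNormalCDF v)) u := by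
  rw [deriv_deriv_log_stdNormalCDF, le_div_iff₀ (pow_pos (stdNormalCDF_pos u) 2)]
  linarith [mul_stdNormalPDF_mul_stdNormalCDF_add_sq_le_sq u]

theorem stmt0_general (σ : ℝ) (f : ℝ → ℝ) (hf : ∀ x, f x = stdNormalCDF (x / σ)) (x : ℝ) :
    deriv (deriv (fun y => Real.log (f y))) x ≤ 0 ∧
    -1 / σ ^ 2 ≤ deriv (deriv (fun y => Real.log (f y))) x := by
  have hrescale : (fun y => log (f y)) = fun y => log (stdNormalCDF (σ⁻¹ * y)) := by
    funext y; rw [hf, div_eq_inv_mul]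
  rw [hrescale, deriv_deriv_comp_mul_left σ⁻¹ (fun u => log (stdNormalCDF u)), smul_eq_mul,
    inv_pow]
  have hscale : 0 ≤ (σ ^ 2)⁻¹ := by positivity
  refine ⟨mul_nonpos_of_nonneg_of_nonpos hscale (deriv_deriv_log_stdNormalCDF_nonpos _), ?_⟩
  calc -1 / σ ^ 2 = (σ ^ 2)⁻¹ * -1 := by ring
    _ ≤ _ := mul_le_mul_of_nonneg_left (neg_one_le_deriv_deriv_log_stdNormalCDF _) hscale

/-- If `f` is the CDF of `N(0, σ²)`, then `0 ≥ (log f)'' ≥ -1/σ²` everywhere. -/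
theorem stmt0 (σ : ℝ) (hσ : 0 < σ) (f : ℝ → ℝ) (hf : ∀ x, f x = stdNormalCDF (x / σ)) (x : ℝ) :
    deriv (deriv (fun y => Real.log (f y))) x ≤ 0 ∧
    -1 / σ ^ 2 ≤ deriv (deriv (fun y => Real.log (f y))) x :=
  stmt0_general σ f hf x
end

section
/- Let f be a differentiable function taking values in (0,1), and let M, M' ∈ ℝ^{d₁×d₂} satisfy ‖M‖_∞ ≤ α and ‖M'‖_∞ ≤ α (entrywise). Define β_α = sup_{|x|≤α} f(x)(1-f(x))/f'(x)², assumed finite with f' > 0 on [-α,α]. Then the averaged squared Hellinger distance satisfies d_H²(f(M), f(M')) ≥ (1/(8β_α))·‖M - M'‖_F²/(d₁d₂). -/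
open Real Finset

/-!
With `θ x = arcsin √(f x)` the point `(√(f x), √(1 - f x)) = (sin θ x, cos θ x)` lies on the unit
circle, so each Hellinger term is the squared chord `4 sin² (Δ / 2)` between the angles
`θ x, θ y ∈ [0, π/2]`, `Δ = θ x - θ y`. The bound on `β_α` says exactly that
`θ' = f' / (2 √(f (1 - f))) ≥ 1 / (2 √β_α)`, so the mean value theorem gives
`Δ² ≥ (x - y)² / (4 β_α)`, and `4 sin² (Δ / 2) ≥ Δ² / 2` because `sin t ≥ t - t³/6`.
-/

theorem sin_sub_sin_sq_add_cos_sub_cos_sq (a b : ℝ) :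
    (sin a - sin b) ^ 2 + (cos a - cos b) ^ 2 = 4 * sin ((a - b) / 2) ^ 2 := by
  rw [sin_sub_sin, cos_sub_cos]
  linear_combination 4 * sin ((a - b) / 2) ^ 2 * sin_sq_add_cos_sq ((a + b) / 2)

theorem sq_le_two_mul_sin_sq {t : ℝ} (ht₀ : 0 ≤ t) (ht₁ : t ≤ 1) : t ^ 2 ≤ 2 * sin t ^ 2 := by
  rcases ht₀.eq_or_lt with rfl | ht₀
  · simp
  have hsq : t ^ 2 ≤ 1 := by nlinarith
  have hcube : t ^ 3 ≤ t := by nlinarith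
  have h : 5 / 6 * t ≤ sin t := by linarith [sin_gt_sub_cube ht₀]
  nlinarith

theorem hellinger_term_eq_four_sin_sq {p q : ℝ} (hp : p ∈ Set.Icc (0 : ℝ) 1)
    (hq : q ∈ Set.Icc (0 : ℝ) 1) :
    (√p - √q) ^ 2 + (√(1 - p) - √(1 - q)) ^ 2 =
      4 * sin ((arcsin √p - arcsin √q) / 2) ^ 2 := by
  have hsin {r : ℝ} (hr : r ∈ Set.Icc (0 : ℝ) 1) : sin (arcsin √r) = √r :=
    sin_arcsin (by linarith [sqrt_nonneg r]) (sqrt_le_one.2 hr.2)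
  have hcos {r : ℝ} (hr : r ∈ Set.Icc (0 : ℝ) 1) : cos (arcsin √r) = √(1 - r) := by
    rw [cos_arcsin, sq_sqrt hr.1]
  rw [← sin_sub_sin_sq_add_cos_sub_cos_sq, hsin hp, hsin hq, hcos hp, hcos hq]

theorem hasDerivAt_arcsin_sqrt {f : ℝ → ℝ} {f' x : ℝ} (hf : HasDerivAt f f' x)
    (h₀ : 0 < f x) (h₁ : f x < 1) :
    HasDerivAt (fun t => arcsin √(f t)) (f' / (2 * √(f x * (1 - f x)))) x := by
  have hs₁ : √(f x) < 1 := (sqrt_lt' one_pos).2 (by simpa using h₁)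
  refine ((hasDerivAt_arcsin (by linarith [sqrt_nonneg (f x)]) hs₁.ne).comp x
    (hf.sqrt h₀.ne')).congr_deriv ?_
  have : 0 < √(1 - f x) := sqrt_pos.2 (by linarith)
  rw [sq_sqrt h₀.le, sqrt_mul h₀.le]
  field_simp

theorem inv_two_sqrt_le_div_two_sqrt {p d β : ℝ} (hp : 0 < p) (hd : 0 < d)
    (hβ : p / d ^ 2 ≤ β) : (2 * √β)⁻¹ ≤ d / (2 * √p) := by
  have hpβ : p ≤ β * d ^ 2 := (div_le_iff₀ (by positivity)).1 hβ
  have hβ₀ : 0 < β := pos_of_mul_pos_left (hp.trans_le hpβ) (by positivity)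
  have hle : √p ≤ √β * d := by
    rw [← sqrt_sq hd.le, ← sqrt_mul hβ₀.le]
    exact sqrt_le_sqrt hpβ
  rw [inv_eq_one_div, div_le_div_iff₀ (by positivity) (by positivity)]
  linarith

section

variable {f : ℝ → ℝ} {s : Set ℝ} {β : ℝ}

theorem inv_two_sqrt_mul_sub_le_arcsin_sqrt_sub (hs : Convex ℝ s) (hf : Differentiable ℝ f)
    (hrange : ∀ x, f x ∈ Set.Ioo (0 : ℝ) 1) (hf' : ∀ x ∈ s, 0 < deriv f x)
    (hβ : ∀ x ∈ s, f x * (1 - f x) / deriv f x ^ 2 ≤ β) {x y : ℝ} (hx : x ∈ s) (hy : y ∈ s)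
    (hxy : x ≤ y) : (2 * √β)⁻¹ * (y - x) ≤ arcsin √(f y) - arcsin √(f x) := by
  have hθ (t : ℝ) := hasDerivAt_arcsin_sqrt (hf t).hasDerivAt (hrange t).1 (hrange t).2
  refine hs.mul_sub_le_image_sub_of_le_deriv (fun t _ => (hθ t).continuousAt.continuousWithinAt)
    (fun t _ => (hθ t).differentiableAt.differentiableWithinAt) (fun t ht => ?_) x hx y hy hxy
  replace ht := interior_subset ht
  rw [(hθ t).deriv]
  exact inv_two_sqrt_le_div_two_sqrt (mul_pos (hrange t).1 (sub_pos.2 (hrange t).2))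
    (hf' t ht) (hβ t ht)

theorem sq_sub_div_le_hellinger_term (hs : Convex ℝ s) (hf : Differentiable ℝ f)
    (hrange : ∀ x, f x ∈ Set.Ioo (0 : ℝ) 1) (hf' : ∀ x ∈ s, 0 < deriv f x)
    (hβ : ∀ x ∈ s, f x * (1 - f x) / deriv f x ^ 2 ≤ β) {x y : ℝ} (hx : x ∈ s) (hy : y ∈ s) :
    (x - y) ^ 2 / (8 * β) ≤ (√(f x) - √(f y)) ^ 2 + (√(1 - f x) - √(1 - f y)) ^ 2 := by
  wlog hyx : y ≤ x generalizing x y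
  · convert this hy hx (le_of_not_ge hyx) using 1 <;> ring
  have hβ₀ : 0 < β :=
    (div_pos (mul_pos (hrange x).1 (sub_pos.2 (hrange x).2)) (pow_pos (hf' x hx) 2)).trans_le
      (hβ x hx)
  have hmem (t : ℝ) : f t ∈ Set.Icc (0 : ℝ) 1 := Set.Ioo_subset_Icc_self (hrange t)
  set Δ := arcsin √(f x) - arcsin √(f y)
  have hΔ : (2 * √β)⁻¹ * (x - y) ≤ Δ :=
    inv_two_sqrt_mul_sub_le_arcsin_sqrt_sub hs hf hrange hf' hβ hy hx hyx
  have hΔ₀ : 0 ≤ Δ := (mul_nonneg (by positivity) (sub_nonneg.2 hyx)).trans hΔ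
  have hΔ_le : Δ ≤ π / 2 := by
    have := arcsin_le_pi_div_two √(f x)
    have := arcsin_nonneg.2 (sqrt_nonneg (f y))
    linarith
  have hchord : Δ ^ 2 ≤ 8 * sin (Δ / 2) ^ 2 := by
    have h := sq_le_two_mul_sin_sq (t := Δ / 2) (by positivity) (by linarith [pi_lt_four])
    linarith [show (Δ / 2) ^ 2 = Δ ^ 2 / 4 by ring]
  rw [hellinger_term_eq_four_sin_sq (hmem x) (hmem y)]
  calc (x - y) ^ 2 / (8 * β) = ((2 * √β)⁻¹ * (x - y)) ^ 2 / 2 := by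
        rw [mul_pow, inv_pow, mul_pow, sq_sqrt hβ₀.le]; ring
    _ ≤ Δ ^ 2 / 2 := by gcongr
    _ ≤ 4 * sin (Δ / 2) ^ 2 := by linarith

end

theorem stmt9_general (d₁ d₂ : ℕ) (α : ℝ)
    (f : ℝ → ℝ) (hf : Differentiable ℝ f) (hrange : ∀ x, f x ∈ Set.Ioo (0 : ℝ) 1)
    (hf' : ∀ x ∈ Set.Icc (-α) α, 0 < deriv f x)
    (βα : ℝ)
    (hβ : ∀ x ∈ Set.Icc (-α) α, f x * (1 - f x) / (deriv f x) ^ 2 ≤ βα)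
    (M M' : Matrix (Fin d₁) (Fin d₂) ℝ)
    (hM : ∀ i j, |M i j| ≤ α) (hM' : ∀ i j, |M' i j| ≤ α) :
    (1 / (d₁ * d₂ : ℝ)) * ∑ i : Fin d₁, ∑ j : Fin d₂,
        ((Real.sqrt (f (M i j)) - Real.sqrt (f (M' i j))) ^ 2 +
          (Real.sqrt (1 - f (M i j)) - Real.sqrt (1 - f (M' i j))) ^ 2) ≥
      (1 / (8 * βα)) * (∑ i : Fin d₁, ∑ j : Fin d₂, (M i j - M' i j) ^ 2) / (d₁ * d₂ : ℝ) := by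
  calc (1 / (8 * βα)) * (∑ i : Fin d₁, ∑ j : Fin d₂, (M i j - M' i j) ^ 2) / (d₁ * d₂ : ℝ)
      = (1 / (d₁ * d₂ : ℝ)) * ∑ i : Fin d₁, ∑ j : Fin d₂, (M i j - M' i j) ^ 2 / (8 * βα) := by
        simp only [← sum_div]
        ring
    _ ≤ _ := by
        gcongr with i _ j _
        exact sq_sub_div_le_hellinger_term (convex_Icc (-α) α) hf hrange hf' hβ
          (abs_le.1 (hM i j)) (abs_le.1 (hM' i j))

/-- Hellinger-to-Frobenius bound: for a differentiable `f` with values in `(0,1)` and matrices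
`M, M'` with entries bounded by `α`, the averaged squared Hellinger distance between `f(M)`
and `f(M')` is at least `(1/(8 β_α)) ‖M - M'‖_F²/(d₁d₂)`. -/
theorem stmt9 (d₁ d₂ : ℕ) (hd₁ : 0 < d₁) (hd₂ : 0 < d₂) (α : ℝ) (hα : 0 < α)
    (f : ℝ → ℝ) (hf : Differentiable ℝ f) (hrange : ∀ x, f x ∈ Set.Ioo (0 : ℝ) 1)
    (hf' : ∀ x ∈ Set.Icc (-α) α, 0 < deriv f x)
    (βα : ℝ) (hβpos : 0 < βα)
    (hβ : ∀ x ∈ Set.Icc (-α) α, f x * (1 - f x) / (deriv f x) ^ 2 ≤ βα)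
    (M M' : Matrix (Fin d₁) (Fin d₂) ℝ)
    (hM : ∀ i j, |M i j| ≤ α) (hM' : ∀ i j, |M' i j| ≤ α) :
    (1 / (d₁ * d₂ : ℝ)) * ∑ i : Fin d₁, ∑ j : Fin d₂,
        ((Real.sqrt (f (M i j)) - Real.sqrt (f (M' i j))) ^ 2 +
          (Real.sqrt (1 - f (M i j)) - Real.sqrt (1 - f (M' i j))) ^ 2) ≥
      (1 / (8 * βα)) * (∑ i : Fin d₁, ∑ j : Fin d₂, (M i j - M' i j) ^ 2) / (d₁ * d₂ : ℝ) :=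
  stmt9_general d₁ d₂ α f hf hrange hf' βα hβ M M' hM hM'
end
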